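/- arXiv:2410.17630 — 2 statements merged into one kernel-verified Lean document; each statement's English description precedes it below -/
import Mathlib

section
/- The first Dirichlet eigenvalue of a k-uniform supertree with boundary is positive and simple, and every corresponding eigenfunction is either strictly positive on all interior vertices or strictly negative on all interior vertices. -/
open Finset

variable {V : Type*} [Fintype V] [DecidableEq V]

/-- The degree of a vertex: the number of edges containing it. -/
def deg (E : Finset (Finset V)) (v : V) : ℕ := (E.filter (fun e => v ∈ e)).card

/-- The adjacency matrix of a hypergraph. -/
noncomputable def adjMat (E : Finset (Finset V)) (i j : V) : ℝ :=
  if i ≠ j then ∑ e ∈ E.filter (fun e => i ∈ e ∧ j ∈ e), (1 : ℝ) / ((e.card : ℝ) - 1) else 0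

/-- The Laplacian L = D - A applied to a function. -/
noncomputable def lap (E : Finset (Finset V)) (f : V → ℝ) (i : V) : ℝ :=
  (deg E i : ℝ) * f i - ∑ j, adjMat E i j * f j

/-- The Laplacian quadratic form ⟨Lf, f⟩. -/
noncomputable def lapForm (E : Finset (Finset V)) (f : V → ℝ) : ℝ :=
  ∑ i, lap E f i * f i

/-- Two vertices are adjacent if they are distinct and share an edge. -/
def HAdj (E : Finset (Finset V)) (u v : V) : Prop :=
  u ≠ v ∧ ∃ e ∈ E, u ∈ e ∧ v ∈ e

/-- A hypergraph is connected if any two vertices are joined by a path. -/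
def HyperConnected (E : Finset (Finset V)) : Prop :=
  ∀ u v : V, Relation.ReflTransGen (HAdj E) u v

/-- A cycle: distinct vertices u_1,…,u_p and distinct edges e_1,…,e_p (p ≥ 2)
with u_i, u_{i+1} ∈ e_i cyclically. -/
def HasCycle (E : Finset (Finset V)) : Prop :=
  ∃ (p : ℕ) (hp : 2 ≤ p) (u : Fin p → V) (e : Fin p → Finset V),
    Function.Injective u ∧ Function.Injective e ∧
    (∀ i, e i ∈ E) ∧ (∀ i : Fin p, u i ∈ e i ∧ u (i + ⟨1, by omega⟩) ∈ e i)

/-- A k-uniform supertree: connected, acyclic, every edge of size k. -/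
def IsSupertree (k : ℕ) (E : Finset (Finset V)) : Prop :=
  (∀ e ∈ E, e.card = k) ∧ HyperConnected E ∧ ¬ HasCycle E

/-- The Rayleigh quotient. -/
noncomputable def rayleigh (E : Finset (Finset V)) (f : V → ℝ) : ℝ :=
  lapForm E f / ∑ v, (f v) ^ 2

/-- f vanishes on the boundary (the degree-one vertices). -/
def Vanishes (E : Finset (Finset V)) (f : V → ℝ) : Prop :=
  ∀ v, deg E v = 1 → f v = 0

/-- The first Dirichlet eigenvalue: infimum of Rayleigh quotients of nonzero
functions vanishing on the boundary. -/
noncomputable def firstEig (E : Finset (Finset V)) : ℝ :=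
  sInf {r : ℝ | ∃ f : V → ℝ, f ≠ 0 ∧ Vanishes E f ∧ r = rayleigh E f}

/-- The first Dirichlet eigenfunction: normalized, vanishing on the boundary,
positive on interior vertices, and an eigenfunction of the first eigenvalue. -/
noncomputable def IsFirstEigfun (E : Finset (Finset V)) (f : V → ℝ) : Prop :=
  (∑ v, (f v) ^ 2) = 1 ∧ Vanishes E f ∧ (∀ v, deg E v ≠ 1 → 0 < f v) ∧
  (∀ v, deg E v ≠ 1 → lap E f v = firstEig E * f v)

/-- The underlying simple graph of a hypergraph. -/
def toGraph (E : Finset (Finset V)) : SimpleGraph V where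
  Adj u v := u ≠ v ∧ ∃ e ∈ E, u ∈ e ∧ v ∈ e
  symm := by
    constructor
    rintro u v ⟨h, e, he, hu, hv⟩
    exact ⟨h.symm, e, he, hv, hu⟩
  loopless := by constructor; rintro u ⟨h, -⟩; exact h rfl

/-- The height of a vertex: distance to the root v0. -/
noncomputable def height (E : Finset (Finset V)) (v0 v : V) : ℕ := (toGraph E).dist v0 v

/-- Two hypergraphs have the same degree sequence. -/
def SameDegSeq (E E' : Finset (Finset V)) : Prop :=
  Multiset.map (deg E) Finset.univ.val = Multiset.map (deg E') Finset.univ.val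

/-- The Faber–Krahn property: minimal first Dirichlet eigenvalue among all
k-uniform supertrees with the same degree sequence. -/
noncomputable def FKProperty (k : ℕ) (E : Finset (Finset V)) : Prop :=
  IsSupertree k E ∧
  ∀ E' : Finset (Finset V), IsSupertree k E' → SameDegSeq E E' → firstEig E ≤ firstEig E'

/-- A spiral-like ordering (SLO-ordering) with root v0, encoded by an injective
rank function r; conditions (S1)–(S5). -/
def IsSLO (E : Finset (Finset V)) (v0 : V) (r : V → ℕ) : Prop :=
  Function.Injective r ∧ (∀ v, r v0 ≤ r v) ∧
  -- (S1)
  (∀ u v, r u < r v → height E v0 u ≤ height E v0 v) ∧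
  -- (S2)
  (∀ u v u1 v1 : V, (toGraph E).Adj u u1 → height E v0 u1 = height E v0 u + 1 →
     (toGraph E).Adj v v1 → height E v0 v1 = height E v0 v + 1 →
     r u < r v → r u1 < r v1) ∧
  -- (S3)
  (∀ u v, r u < r v → deg E u = 1 → deg E v = 1) ∧
  -- (S4): no vertex outside an edge lies between two non-minimal vertices of the edge
  (∀ e ∈ E, ∀ x ∈ e, ∀ y ∈ e, ∀ z : V, z ∉ e → r x < r z → r z < r y → ∀ w ∈ e, r x ≤ r w) ∧
  -- (S5)
  (∀ u v, deg E u ≠ 1 → deg E v ≠ 1 → r u < r v → deg E u ≤ deg E v)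

/-- A supertree admitting an SLO-ordering. -/
def HasSLO (E : Finset (Finset V)) : Prop := ∃ (v0 : V) (r : V → ℕ), IsSLO E v0 r

/-- Isomorphism of hypergraphs on the same vertex set. -/
def IsoHyper (E E' : Finset (Finset V)) : Prop :=
  ∃ σ : V ≃ V, E' = E.image (fun e => e.image σ)

/-!
The Laplacian form is a sum of squared differences over edges,
`⟨L f, f⟩ = ∑ₑ ∑_{i,j ∈ e} (f i - f j)² / (2 (|e| - 1))`. Hence it is nonnegative, does not increase
under `f ↦ |f|`, and vanishes only on functions that are constant along edges, i.e. constant on the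
connected hypergraph, i.e. zero under the Dirichlet condition. By compactness of the unit sphere the
Rayleigh quotient attains its infimum, which is therefore positive, and the first variation shows
that every function realising it is an eigenfunction.

If `f` is a first eigenfunction, so is `|f|`, hence so are `|f| + f` and `|f| - f`. A nonnegative
eigenfunction vanishing at an interior vertex `v` vanishes on every edge through `v`, because
`L f v = -∑ₑ ∑_{j ∈ e} f j / (|e| - 1)`; since a boundary vertex lies in a single edge, this spreads
over the whole hypergraph. So `|f| ± f` are each zero or positive inside, which gives the sign
dichotomy, and simplicity follows since `g - (g v / f v) • f` is a first eigenfunction vanishing at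
an interior vertex `v`.
-/

lemma two_mul_card_sub_one_pos {α : Type*} {s : Finset α} (hs : 2 ≤ s.card) :
    (0 : ℝ) < 2 * (s.card - 1) := by
  have : (2 : ℝ) ≤ s.card := by exact_mod_cast hs
  linarith

lemma adjMat_comm {α : Type*} [DecidableEq α] (E : Finset (Finset α)) (i j : α) :
    adjMat E i j = adjMat E j i := by
  unfold adjMat
  by_cases h : i = j
  · subst h; rfl
  · rw [if_pos h, if_pos (Ne.symm h)]
    exact Finset.sum_congr (Finset.filter_congr fun e _ => and_comm) fun _ _ => rfl

lemma lap_add (E : Finset (Finset V)) (f g : V → ℝ) (i : V) :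
    lap E (f + g) i = lap E f i + lap E g i := by
  simp only [lap, Pi.add_apply, mul_add, Finset.sum_add_distrib]
  ring

lemma lap_smul (E : Finset (Finset V)) (c : ℝ) (f : V → ℝ) (i : V) :
    lap E (c • f) i = c * lap E f i := by
  simp only [lap, Pi.smul_apply, smul_eq_mul, mul_sub, Finset.mul_sum]
  congr 1
  · ring
  · exact Finset.sum_congr rfl fun _ _ => by ring

lemma sum_lap_mul_comm (E : Finset (Finset V)) (f g : V → ℝ) :
    ∑ i, lap E f i * g i = ∑ i, lap E g i * f i := by
  simp only [lap, sub_mul, Finset.sum_sub_distrib, Finset.sum_mul]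
  congr 1
  · exact Finset.sum_congr rfl fun _ _ => by ring
  · rw [Finset.sum_comm]
    exact Finset.sum_congr rfl fun i _ => Finset.sum_congr rfl fun j _ => by
      rw [adjMat_comm E j i]; ring

lemma sum_adjMat_mul (E : Finset (Finset V)) (f : V → ℝ) (i : V) :
    ∑ j, adjMat E i j * f j = ∑ e ∈ E with i ∈ e, ∑ j ∈ e.erase i, f j / (e.card - 1) := by
  have h : ∀ j, adjMat E i j * f j =
      ∑ e ∈ E with i ∈ e, if j ∈ e.erase i then f j / (e.card - 1) else 0 := by
    intro j
    by_cases hij : i = j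
    · subst hij; simp [adjMat]
    · rw [adjMat, if_pos hij, Finset.sum_mul, Finset.sum_filter, Finset.sum_filter]
      refine Finset.sum_congr rfl fun e _ => ?_
      by_cases hi : i ∈ e <;> by_cases hj : j ∈ e <;> simp [hi, hj, Ne.symm hij, div_eq_inv_mul]
  simp only [h]
  rw [Finset.sum_comm]
  exact Finset.sum_congr rfl fun e _ => by rw [Finset.sum_ite_mem, Finset.univ_inter]

lemma sum_sub_div_eq {α : Type*} [DecidableEq α] (s : Finset α) (a : α → ℝ) {i : α} (hi : i ∈ s)
    (hs : 2 ≤ s.card) :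
    ∑ j ∈ s, (a i - a j) / (s.card - 1) = a i - ∑ j ∈ s.erase i, a j / (s.card - 1) := by
  have hc : ((s.card : ℝ) - 1) ≠ 0 := by linarith [two_mul_card_sub_one_pos hs]
  rw [← Finset.add_sum_erase s _ hi, sub_self, zero_div, zero_add, ← Finset.sum_div,
    ← Finset.sum_div, Finset.sum_sub_distrib, Finset.sum_const, Finset.card_erase_of_mem hi,
    nsmul_eq_mul, Nat.cast_sub (by omega)]
  field_simp
  ring

lemma lap_eq_sum_edges (E : Finset (Finset V)) (hcard : ∀ e ∈ E, 2 ≤ e.card) (f : V → ℝ)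
    (i : V) : lap E f i = ∑ e ∈ E with i ∈ e, ∑ j ∈ e, (f i - f j) / (e.card - 1) := by
  rw [lap, sum_adjMat_mul, deg, Finset.sum_congr rfl fun e he =>
    sum_sub_div_eq e f (Finset.mem_filter.1 he).2 (hcard e (Finset.mem_filter.1 he).1),
    Finset.sum_sub_distrib, Finset.sum_const, nsmul_eq_mul]

lemma sum_sum_sub_mul_self {α : Type*} (s : Finset α) (a : α → ℝ) :
    ∑ i ∈ s, ∑ j ∈ s, (a i - a j) * a i = (∑ i ∈ s, ∑ j ∈ s, (a i - a j) ^ 2) / 2 := by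
  have hswap : ∑ i ∈ s, ∑ j ∈ s, (a i - a j) * a i = ∑ i ∈ s, ∑ j ∈ s, (a j - a i) * a j :=
    Finset.sum_comm
  have hsum : ∑ i ∈ s, ∑ j ∈ s, ((a i - a j) * a i + (a j - a i) * a j)
      = ∑ i ∈ s, ∑ j ∈ s, (a i - a j) ^ 2 :=
    Finset.sum_congr rfl fun _ _ => Finset.sum_congr rfl fun _ _ => by ring
  simp only [Finset.sum_add_distrib] at hsum
  linarith

lemma lapForm_eq_sum_edges (E : Finset (Finset V)) (hcard : ∀ e ∈ E, 2 ≤ e.card)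
    (f : V → ℝ) :
    lapForm E f = ∑ e ∈ E, (∑ i ∈ e, ∑ j ∈ e, (f i - f j) ^ 2) / (2 * (e.card - 1)) := by
  calc lapForm E f
      = ∑ i, ∑ e ∈ E with i ∈ e, ∑ j ∈ e, (f i - f j) * f i / (e.card - 1) := by
        simp only [lapForm, lap_eq_sum_edges E hcard, Finset.sum_mul, div_mul_eq_mul_div]
    _ = ∑ e ∈ E, ∑ i ∈ e, ∑ j ∈ e, (f i - f j) * f i / (e.card - 1) :=
        Finset.sum_comm' fun i e => by simp [and_comm]
    _ = ∑ e ∈ E, (∑ i ∈ e, ∑ j ∈ e, (f i - f j) ^ 2) / (2 * (e.card - 1)) := by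
        refine Finset.sum_congr rfl fun e _ => ?_
        rw [← div_div, ← sum_sum_sub_mul_self, Finset.sum_div]
        simp only [Finset.sum_div]

lemma lapForm_nonneg (E : Finset (Finset V)) (hcard : ∀ e ∈ E, 2 ≤ e.card) (f : V → ℝ) :
    0 ≤ lapForm E f := by
  rw [lapForm_eq_sum_edges E hcard]
  exact Finset.sum_nonneg fun e he =>
    div_nonneg (by positivity) (two_mul_card_sub_one_pos (hcard e he)).le

lemma lapForm_abs_le (E : Finset (Finset V)) (hcard : ∀ e ∈ E, 2 ≤ e.card) (f : V → ℝ) :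
    lapForm E |f| ≤ lapForm E f := by
  rw [lapForm_eq_sum_edges E hcard, lapForm_eq_sum_edges E hcard]
  gcongr ∑ e ∈ E, (∑ i ∈ e, ∑ j ∈ e, ?_) / _ with e he i _ j _
  · exact (two_mul_card_sub_one_pos (hcard e he)).le
  · exact sq_le_sq.2 (abs_abs_sub_abs_le_abs_sub (f i) (f j))

lemma apply_eq_of_lapForm_eq_zero (E : Finset (Finset V)) (hcard : ∀ e ∈ E, 2 ≤ e.card)
    {f : V → ℝ} (h : lapForm E f = 0) {e : Finset V} (he : e ∈ E) {i j : V} (hi : i ∈ e)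
    (hj : j ∈ e) : f i = f j := by
  rw [lapForm_eq_sum_edges E hcard] at h
  have hedge := (Finset.sum_eq_zero_iff_of_nonneg fun e he =>
    div_nonneg (by positivity) (two_mul_card_sub_one_pos (hcard e he)).le).1 h e he
  rw [div_eq_zero_iff, or_iff_left (two_mul_card_sub_one_pos (hcard e he)).ne'] at hedge
  have hrow := (Finset.sum_eq_zero_iff_of_nonneg fun _ _ => by positivity).1 hedge i hi
  have hij := (Finset.sum_eq_zero_iff_of_nonneg fun _ _ => by positivity).1 hrow j hj
  exact sub_eq_zero.1 (pow_eq_zero_iff two_ne_zero |>.1 hij)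

lemma lapForm_smul (E : Finset (Finset V)) (c : ℝ) (f : V → ℝ) :
    lapForm E (c • f) = c ^ 2 * lapForm E f := by
  simp only [lapForm, lap_smul, Pi.smul_apply, smul_eq_mul, Finset.mul_sum]
  exact Finset.sum_congr rfl fun _ _ => by ring

lemma lapForm_add_smul (E : Finset (Finset V)) (f h : V → ℝ) (t : ℝ) :
    lapForm E (f + t • h) = lapForm E f + 2 * t * ∑ i, lap E f i * h i + t ^ 2 * lapForm E h := by
  have hexpand : ∀ i, lap E (f + t • h) i * (f + t • h) i = lap E f i * f i
      + 2 * t * (lap E f i * h i) + t ^ 2 * (lap E h i * h i)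
      + t * (lap E h i * f i - lap E f i * h i) := fun i => by
    rw [lap_add, lap_smul, Pi.add_apply, Pi.smul_apply, smul_eq_mul]
    ring
  simp only [lapForm, hexpand, Finset.sum_add_distrib, ← Finset.mul_sum, Finset.sum_sub_distrib,
    sum_lap_mul_comm E h f, sub_self, mul_zero, add_zero]

lemma HyperConnected.apply_eq {α β : Type*} {E : Finset (Finset α)} (hE : HyperConnected E)
    {f : α → β} (hf : ∀ x y, HAdj E x y → f x = f y) (u v : α) : f u = f v := by
  induction hE u v with
  | refl => rfl
  | tail _ hxy ih => exact ih.trans (hf _ _ hxy)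

lemma HyperConnected.exists_mem_edge {α : Type*} {E : Finset (Finset α)} (hE : HyperConnected E)
    {v w : α} (hvw : v ≠ w) (u : α) : ∃ e ∈ E, u ∈ e := by
  obtain ⟨w', hw'⟩ : ∃ w', u ≠ w' := by
    by_cases h : u = v
    · exact ⟨w, h ▸ hvw⟩
    · exact ⟨v, h⟩
  rcases Relation.ReflTransGen.cases_head (hE u w') with h | ⟨_, ⟨-, e, he, hu, -⟩, -⟩
  · exact absurd h hw'
  · exact ⟨e, he, hu⟩

lemma edge_eq_of_deg_eq_one {α : Type*} [DecidableEq α] {E : Finset (Finset α)} {y : α}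
    (hy : deg E y = 1) {e₁ e₂ : Finset α} (he₁ : e₁ ∈ E) (he₂ : e₂ ∈ E) (hy₁ : y ∈ e₁)
    (hy₂ : y ∈ e₂) : e₁ = e₂ :=
  Finset.card_le_one.1 hy.le e₁ (Finset.mem_filter.2 ⟨he₁, hy₁⟩) e₂ (Finset.mem_filter.2 ⟨he₂, hy₂⟩)

lemma HyperConnected.forall_of_spread {α : Type*} [DecidableEq α] {E : Finset (Finset α)}
    (hE : HyperConnected E) (hedge : ∀ u, ∃ e ∈ E, u ∈ e) (p : α → Prop)
    (hspread : ∀ x, deg E x ≠ 1 → p x → ∀ e ∈ E, x ∈ e → ∀ j ∈ e, p j)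
    {v : α} (hv : deg E v ≠ 1) (hpv : p v) (u : α) : p u := by
  -- a boundary vertex lies in a single edge, so the edge through which it was reached covers it
  have hcover : ∀ w, ∀ e ∈ E, w ∈ e → ∀ j ∈ e, p j := by
    intro w
    induction hE v w with
    | refl => exact hspread v hv hpv
    | @tail x y _ hxy ih =>
      obtain ⟨-, e₁, he₁, hx, hy⟩ := hxy
      intro e he hye
      by_cases hdeg : deg E y = 1
      · rw [edge_eq_of_deg_eq_one hdeg he he₁ hye hy]
        exact ih e₁ he₁ hx
      · exact hspread y hdeg (ih e₁ he₁ hx y hy) e he hye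
  obtain ⟨e, he, hue⟩ := hedge u
  exact hcover u e he hue u hue

lemma lapForm_pos (E : Finset (Finset V)) (hcard : ∀ e ∈ E, 2 ≤ e.card)
    (hconn : HyperConnected E) (hb : ∃ v, deg E v = 1) {f : V → ℝ} (hf : Vanishes E f)
    (hf0 : f ≠ 0) : 0 < lapForm E f := by
  refine (lapForm_nonneg E hcard f).lt_of_ne fun h => hf0 (funext fun u => ?_)
  obtain ⟨b, hb⟩ := hb
  have hconst : ∀ x y, HAdj E x y → f x = f y := fun x y ⟨_, e, he, hx, hy⟩ =>
    apply_eq_of_lapForm_eq_zero E hcard h.symm he hx hy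
  rw [hconn.apply_eq hconst u b, hf b hb]
  rfl

def dirichletEigenspace (E : Finset (Finset V)) (μ : ℝ) : Submodule ℝ (V → ℝ) where
  carrier := {f | Vanishes E f ∧ ∀ v, deg E v ≠ 1 → lap E f v = μ * f v}
  add_mem' := by
    rintro f g ⟨hf, hf'⟩ ⟨hg, hg'⟩
    refine ⟨fun v hv => by simp [hf v hv, hg v hv], fun v hv => ?_⟩
    rw [lap_add, hf' v hv, hg' v hv, Pi.add_apply, mul_add]
  zero_mem' := ⟨fun _ _ => rfl, fun _ _ => by simp [lap]⟩
  smul_mem' := by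
    rintro c f ⟨hf, hf'⟩
    refine ⟨fun v hv => by simp [hf v hv], fun v hv => ?_⟩
    rw [lap_smul, hf' v hv, Pi.smul_apply, smul_eq_mul]
    ring

lemma lapForm_eq_of_mem_dirichletEigenspace {E : Finset (Finset V)} {μ : ℝ} {f : V → ℝ}
    (hf : f ∈ dirichletEigenspace E μ) : lapForm E f = μ * ∑ v, f v ^ 2 := by
  rw [lapForm, Finset.mul_sum]
  refine Finset.sum_congr rfl fun v _ => ?_
  by_cases hv : deg E v = 1
  · simp [hf.1 v hv]
  · rw [hf.2 v hv]
    ring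

lemma sum_sq_add_smul {α : Type*} [Fintype α] (f h : α → ℝ) (t : ℝ) :
    ∑ i, (f + t • h) i ^ 2 = ∑ i, f i ^ 2 + 2 * t * ∑ i, f i * h i + t ^ 2 * ∑ i, h i ^ 2 := by
  simp only [Finset.mul_sum, ← Finset.sum_add_distrib]
  refine Finset.sum_congr rfl fun _ _ => ?_
  simp only [Pi.add_apply, Pi.smul_apply, smul_eq_mul]
  ring

lemma sum_sq_pos {α : Type*} [Fintype α] {f : α → ℝ} (hf : f ≠ 0) : 0 < ∑ v, f v ^ 2 := by
  obtain ⟨v, hv⟩ := Function.ne_iff.1 hf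
  exact Finset.sum_pos' (fun i _ => sq_nonneg (f i)) ⟨v, Finset.mem_univ v, sq_pos_of_ne_zero hv⟩

/-- First variation along `f + t • Pi.single v 1`: a quadratic in `t` that is nonnegative and
vanishes at `t = 0` has zero linear coefficient. -/
lemma mem_dirichletEigenspace_of_lapForm_eq {E : Finset (Finset V)} {μ : ℝ}
    (hmin : ∀ g, Vanishes E g → μ * ∑ v, g v ^ 2 ≤ lapForm E g) {f : V → ℝ}
    (hf : Vanishes E f) (hQ : lapForm E f = μ * ∑ v, f v ^ 2) :
    f ∈ dirichletEigenspace E μ := by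
  refine ⟨hf, fun v hv => ?_⟩
  set δ : V → ℝ := Pi.single v 1
  have hδ : Vanishes E δ := fun u hu => Pi.single_eq_of_ne (fun (h : u = v) => hv (h ▸ hu)) 1
  have hquad : ∀ t : ℝ,
      0 ≤ (lapForm E δ - μ) * (t * t) + 2 * (lap E f v - μ * f v) * t + 0 := by
    intro t
    have h := hmin (f + t • δ) fun u hu => by simp [hf u hu, hδ u hu]
    simp only [lapForm_add_smul, sum_sq_add_smul, hQ, δ, Pi.single_apply, mul_ite, mul_one,
      mul_zero, Finset.sum_ite_eq', Finset.mem_univ, if_true, ite_pow, one_pow,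
      zero_pow two_ne_zero] at h
    nlinarith
  have hdisc := discrim_le_zero hquad
  rw [discrim] at hdisc
  nlinarith [sq_nonneg (lap E f v - μ * f v)]

lemma rayleigh_smul (E : Finset (Finset V)) {c : ℝ} (hc : c ≠ 0) (f : V → ℝ) :
    rayleigh E (c • f) = rayleigh E f := by
  simp only [rayleigh, lapForm_smul, Pi.smul_apply, smul_eq_mul, mul_pow, ← Finset.mul_sum]
  exact mul_div_mul_left _ _ (pow_ne_zero 2 hc)

lemma continuous_lapForm (E : Finset (Finset V)) : Continuous (lapForm E) := by
  unfold lapForm lap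
  fun_prop

lemma exists_rayleigh_minimizer (E : Finset (Finset V)) (hi : ∃ v, deg E v ≠ 1) :
    ∃ g, g ≠ 0 ∧ Vanishes E g ∧ ∀ f, f ≠ 0 → Vanishes E f → rayleigh E g ≤ rayleigh E f := by
  set K : Set (V → ℝ) := {f | Vanishes E f ∧ ∑ v, f v ^ 2 = 1}
  have hnorm : Continuous fun f : V → ℝ => ∑ v, f v ^ 2 := by fun_prop
  have hK : IsCompact K := by
    refine Metric.isCompact_of_isClosed_isBounded ?_
      ((Metric.isBounded_closedBall (x := 0) (r := 1)).subset ?_)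
    · have hvan : IsClosed {f : V → ℝ | ∀ v, deg E v = 1 → f v = 0} := by
        simp only [Set.ofPred_forall]
        exact isClosed_iInter fun v => isClosed_iInter fun _ =>
          isClosed_eq (continuous_apply v) continuous_const
      exact hvan.inter (isClosed_eq hnorm continuous_const)
    · rintro f ⟨-, hf⟩
      rw [mem_closedBall_zero_iff, pi_norm_le_iff_of_nonneg zero_le_one]
      intro v
      rw [Real.norm_eq_abs, ← sq_le_one_iff_abs_le_one, ← hf]
      exact Finset.single_le_sum (fun i _ => sq_nonneg (f i)) (Finset.mem_univ v)
  obtain ⟨v, hv⟩ := hi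
  have hδ : (Pi.single v 1 : V → ℝ) ∈ K :=
    ⟨fun u hu => Pi.single_eq_of_ne (fun (h : u = v) => hv (h ▸ hu)) 1,
      by simp [Pi.single_apply, ite_pow]⟩
  obtain ⟨g, hgK, hmin⟩ := hK.exists_isMinOn ⟨_, hδ⟩
    ((continuous_lapForm E).continuousOn.div hnorm.continuousOn fun f hf => hf.2 ▸ one_ne_zero)
  refine ⟨g, fun h => by simpa [h] using hgK.2, hgK.1, fun f hf0 hf => ?_⟩
  have hN := sum_sq_pos hf0
  have hc : (√(∑ v, f v ^ 2))⁻¹ ≠ 0 := inv_ne_zero (Real.sqrt_pos.2 hN).ne'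
  have hvan : Vanishes E ((√(∑ v, f v ^ 2))⁻¹ • f) := fun u hu => by simp [hf u hu]
  rw [← rayleigh_smul E hc f]
  refine hmin ⟨hvan, ?_⟩
  simp only [Pi.smul_apply, smul_eq_mul, mul_pow, ← Finset.mul_sum, inv_pow,
    Real.sq_sqrt hN.le]
  exact inv_mul_cancel₀ hN.ne'

lemma firstEig_mul_le_lapForm (E : Finset (Finset V)) (hcard : ∀ e ∈ E, 2 ≤ e.card)
    {f : V → ℝ} (hf : Vanishes E f) : firstEig E * ∑ v, f v ^ 2 ≤ lapForm E f := by
  rcases eq_or_ne f 0 with rfl | hf0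
  · simp [lapForm, lap]
  have hbdd : BddBelow {r : ℝ | ∃ f : V → ℝ, f ≠ 0 ∧ Vanishes E f ∧ r = rayleigh E f} := by
    refine ⟨0, ?_⟩
    rintro _ ⟨g, -, -, rfl⟩
    exact div_nonneg (lapForm_nonneg E hcard g) (by positivity)
  rw [← le_div_iff₀ (sum_sq_pos hf0)]
  exact csInf_le hbdd ⟨f, hf0, hf, rfl⟩

lemma firstEig_pos (E : Finset (Finset V)) (hcard : ∀ e ∈ E, 2 ≤ e.card)
    (hconn : HyperConnected E) (hb : ∃ v, deg E v = 1) (hi : ∃ v, deg E v ≠ 1) :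
    0 < firstEig E := by
  obtain ⟨g, hg0, hg, hmin⟩ := exists_rayleigh_minimizer E hi
  have hleast : IsLeast {r : ℝ | ∃ f : V → ℝ, f ≠ 0 ∧ Vanishes E f ∧ r = rayleigh E f}
      (rayleigh E g) := ⟨⟨g, hg0, hg, rfl⟩, by rintro _ ⟨f, hf0, hf, rfl⟩; exact hmin f hf0 hf⟩
  rw [firstEig, hleast.csInf_eq]
  exact div_pos (lapForm_pos E hcard hconn hb hg hg0) (sum_sq_pos hg0)

lemma abs_mem_dirichletEigenspace_firstEig (E : Finset (Finset V))
    (hcard : ∀ e ∈ E, 2 ≤ e.card) {f : V → ℝ} (hf : f ∈ dirichletEigenspace E (firstEig E)) :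
    |f| ∈ dirichletEigenspace E (firstEig E) := by
  have hvan : Vanishes E |f| := fun v hv => by simp [hf.1 v hv]
  have hsq : ∑ v, |f| v ^ 2 = ∑ v, f v ^ 2 := by simp
  refine mem_dirichletEigenspace_of_lapForm_eq (fun g hg => firstEig_mul_le_lapForm E hcard hg)
    hvan (le_antisymm ?_ (firstEig_mul_le_lapForm E hcard hvan))
  calc lapForm E |f| ≤ lapForm E f := lapForm_abs_le E hcard f
    _ = firstEig E * ∑ v, |f| v ^ 2 := by rw [lapForm_eq_of_mem_dirichletEigenspace hf, hsq]

lemma eq_zero_of_nonneg_of_apply_eq_zero (E : Finset (Finset V))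
    (hcard : ∀ e ∈ E, 2 ≤ e.card) (hconn : HyperConnected E) (hedge : ∀ u, ∃ e ∈ E, u ∈ e)
    {μ : ℝ} {f : V → ℝ} (hf : f ∈ dirichletEigenspace E μ) (hf0 : 0 ≤ f) {v : V}
    (hv : deg E v ≠ 1) (hfv : f v = 0) : f = 0 := by
  funext u
  refine hconn.forall_of_spread hedge (fun x => f x = 0) (fun x hx hfx e he hxe j hj => ?_) hv hfv u
  have hterm : ∀ e ∈ E, ∀ j ∈ e, (f x - f j) / (e.card - 1) ≤ 0 := fun e he j _ =>
    div_nonpos_of_nonpos_of_nonneg (by have : 0 ≤ f j := hf0 j; linarith)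
      (by linarith [two_mul_card_sub_one_pos (hcard e he)])
  have hlap : ∑ e ∈ E with x ∈ e, ∑ j ∈ e, (f x - f j) / (e.card - 1) = 0 := by
    rw [← lap_eq_sum_edges E hcard, hf.2 x hx, hfx, mul_zero]
  have hrow := (Finset.sum_eq_zero_iff_of_nonpos fun e he =>
    Finset.sum_nonpos (hterm e (Finset.mem_filter.1 he).1)).1 hlap e (by simp [he, hxe])
  have hj0 := (Finset.sum_eq_zero_iff_of_nonpos (hterm e he)).1 hrow j hj
  rw [div_eq_zero_iff, or_iff_left (by linarith [two_mul_card_sub_one_pos (hcard e he)])] at hj0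
  linarith

lemma eq_zero_or_pos_of_nonneg (E : Finset (Finset V)) (hcard : ∀ e ∈ E, 2 ≤ e.card)
    (hconn : HyperConnected E) (hedge : ∀ u, ∃ e ∈ E, u ∈ e) {μ : ℝ} {f : V → ℝ}
    (hf : f ∈ dirichletEigenspace E μ) (hf0 : 0 ≤ f) :
    f = 0 ∨ ∀ v, deg E v ≠ 1 → 0 < f v := by
  refine or_iff_not_imp_right.2 fun h => ?_
  simp only [not_forall, not_lt] at h
  obtain ⟨v, hv, hfv⟩ := h
  exact eq_zero_of_nonneg_of_apply_eq_zero E hcard hconn hedge hf hf0 hv (hfv.antisymm (hf0 v))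

lemma pos_or_neg_of_mem_dirichletEigenspace_firstEig (E : Finset (Finset V))
    (hcard : ∀ e ∈ E, 2 ≤ e.card) (hconn : HyperConnected E) (hedge : ∀ u, ∃ e ∈ E, u ∈ e)
    {f : V → ℝ} (hf : f ∈ dirichletEigenspace E (firstEig E)) (hf0 : f ≠ 0) :
    (∀ v, deg E v ≠ 1 → 0 < f v) ∨ (∀ v, deg E v ≠ 1 → f v < 0) := by
  have habs := abs_mem_dirichletEigenspace_firstEig E hcard hf
  have hp := eq_zero_or_pos_of_nonneg E hcard hconn hedge (add_mem habs hf)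
    fun v => by simp only [Pi.add_apply, Pi.abs_apply, Pi.zero_apply]; linarith [neg_abs_le (f v)]
  have hn := eq_zero_or_pos_of_nonneg E hcard hconn hedge (sub_mem habs hf)
    fun v => by simp only [Pi.sub_apply, Pi.abs_apply, Pi.zero_apply]; linarith [le_abs_self (f v)]
  rcases hp with hp | hp <;> rcases hn with hn | hn
  · refine absurd (funext fun u => ?_) hf0
    have h1 := congrFun hp u
    have h2 := congrFun hn u
    simp only [Pi.add_apply, Pi.sub_apply, Pi.abs_apply, Pi.zero_apply] at h1 h2 ⊢
    linarith
  · refine Or.inr fun v hv => ?_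
    have h1 := congrFun hp v
    have h2 := hn v hv
    simp only [Pi.add_apply, Pi.sub_apply, Pi.abs_apply, Pi.zero_apply] at h1 h2
    linarith
  · refine Or.inl fun v hv => ?_
    have h1 := hp v hv
    have h2 := congrFun hn v
    simp only [Pi.add_apply, Pi.sub_apply, Pi.abs_apply, Pi.zero_apply] at h1 h2
    linarith
  · refine Or.inl fun v hv => absurd (mul_pos (hp v hv) (hn v hv)) ?_
    simp only [Pi.add_apply, Pi.sub_apply, Pi.abs_apply]
    nlinarith [sq_abs (f v)]

lemma exists_eq_smul_of_mem_dirichletEigenspace_firstEig (E : Finset (Finset V))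
    (hcard : ∀ e ∈ E, 2 ≤ e.card) (hconn : HyperConnected E) (hedge : ∀ u, ∃ e ∈ E, u ∈ e)
    (hi : ∃ v, deg E v ≠ 1) {f g : V → ℝ} (hf : f ∈ dirichletEigenspace E (firstEig E))
    (hg : g ∈ dirichletEigenspace E (firstEig E)) (hf0 : f ≠ 0) : ∃ c : ℝ, g = c • f := by
  obtain ⟨v, hv⟩ := hi
  have hfv : f v ≠ 0 := by
    rcases pos_or_neg_of_mem_dirichletEigenspace_firstEig E hcard hconn hedge hf hf0 with h | h
    exacts [(h v hv).ne', (h v hv).ne]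
  refine ⟨g v / f v, sub_eq_zero.1 (by_contra fun h0 => ?_)⟩
  have hzero : (g - (g v / f v) • f) v = 0 := by simp [div_mul_cancel₀ _ hfv]
  rcases pos_or_neg_of_mem_dirichletEigenspace_firstEig E hcard hconn hedge
    (sub_mem hg (Submodule.smul_mem _ _ hf)) h0 with h | h
  exacts [(h v hv).ne' hzero, (h v hv).ne hzero]

/-- The first Dirichlet eigenvalue of a k-uniform supertree with
boundary is positive and simple, and every corresponding eigenfunction is
strictly positive on all interior vertices or strictly negative on all interior
vertices. -/
theorem firstEig_pos_simple_sign (k : ℕ) (hk : 2 ≤ k)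
    (E : Finset (Finset V)) (h : IsSupertree k E)
    (hb : ∃ v, deg E v = 1) (hi : ∃ v, deg E v ≠ 1) :
    0 < firstEig E ∧
    (∀ f g : V → ℝ,
      f ≠ 0 → Vanishes E f → (∀ v, deg E v ≠ 1 → lap E f v = firstEig E * f v) →
      g ≠ 0 → Vanishes E g → (∀ v, deg E v ≠ 1 → lap E g v = firstEig E * g v) →
      ∃ c : ℝ, g = fun v => c * f v) ∧
    (∀ f : V → ℝ,
      f ≠ 0 → Vanishes E f → (∀ v, deg E v ≠ 1 → lap E f v = firstEig E * f v) →
      (∀ v, deg E v ≠ 1 → 0 < f v) ∨ (∀ v, deg E v ≠ 1 → f v < 0)) := by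
  obtain ⟨huni, hconn, -⟩ := h
  have hcard : ∀ e ∈ E, 2 ≤ e.card := fun e he => huni e he ▸ hk
  have hedge : ∀ u, ∃ e ∈ E, u ∈ e := by
    obtain ⟨b, hb⟩ := hb
    obtain ⟨v, hv⟩ := hi
    exact hconn.exists_mem_edge fun (h : b = v) => hv (h ▸ hb)
  refine ⟨firstEig_pos E hcard hconn hb hi, fun f g hf0 hf hfeig _ hg hgeig => ?_,
    fun f hf0 hf hfeig => pos_or_neg_of_mem_dirichletEigenspace_firstEig E hcard hconn hedge
      ⟨hf, hfeig⟩ hf0⟩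
  obtain ⟨c, rfl⟩ := exists_eq_smul_of_mem_dirichletEigenspace_firstEig E hcard hconn hedge hi
    ⟨hf, hfeig⟩ ⟨hg, hgeig⟩ hf0
  exact ⟨c, rfl⟩
end

section
/- If f is the first Dirichlet eigenfunction of a k-uniform supertree G with boundary, rooted at a vertex v_0 maximizing f, then every interior vertex v has a child w (a neighbor at height h(v)+1) with f(w) < f(v). -/
open Finset

variable {V : Type*} [Fintype V] [DecidableEq V]

/-!
Since `f` attains a positive maximum at `v0`, the maximum principle forces `λ > 0`, so the
eigenvalue equation `λ f(v) = ∑ⱼ a_vj (f(v) - f(j))` yields a neighbour `j` of `v` with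
`f(j) < f(v)`. Monotonicity puts `j` at height `h(v)` or `h(v) + 1`; in the first case any child
`w` of `v` works, since `f(w) ≤ f(j)`. Children exist because in the incidence graph of a
supertree, rooted at `v0`, every vertex lies in at most one edge reaching lower and every edge
has a unique lowest vertex: otherwise two chains from the root would close up into a cycle. An
interior vertex lies in a second edge, and the other vertices of that edge are its children.
-/

section Incidence

variable {V : Type*} {E : Finset (Finset V)} {v0 : V}

lemma toGraph_adj_of_mem {u w : V} {e : Finset V} (h : u ≠ w) (he : e ∈ E) (hu : u ∈ e)
    (hw : w ∈ e) : (toGraph E).Adj u w :=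
  ⟨h, e, he, hu, hw⟩

lemma connected_toGraph (h : HyperConnected E) (v0 : V) : (toGraph E).Connected :=
  haveI : Nonempty V := ⟨v0⟩
  ⟨fun u v => (SimpleGraph.reachable_iff_reflTransGen u v).2 (h u v)⟩

lemma height_le_of_adj {u w : V} (h : (toGraph E).Adj u w) :
    height E v0 w ≤ height E v0 u + 1 := by
  unfold height
  rcases h.diff_dist_adj (u := v0) with h | h | h <;> omega

lemma height_le_of_mem {e : Finset V} (he : e ∈ E) {x y : V} (hx : x ∈ e) (hy : y ∈ e) :
    height E v0 y ≤ height E v0 x + 1 := by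
  rcases eq_or_ne x y with rfl | hxy
  · omega
  · exact height_le_of_adj (toGraph_adj_of_mem hxy he hx hy)

lemma exists_parent {u : V} {n : ℕ} (h : height E v0 u = n + 1) :
    ∃ w, ∃ g ∈ E, w ∈ g ∧ u ∈ g ∧ height E v0 w = n := by
  obtain ⟨p, hp⟩ := SimpleGraph.exists_walk_of_dist_ne_zero (G := toGraph E) (u := v0) (v := u)
    (by unfold height at h; omega)
  have hnil : ¬ p.Nil := by
    rw [← SimpleGraph.Walk.length_eq_zero_iff]; unfold height at h; omega
  obtain ⟨-, g, hg, hwg, hug⟩ := p.adj_penultimate hnil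
  refine ⟨p.penultimate, g, hg, hwg, hug, ?_⟩
  have hle := SimpleGraph.dist_le p.dropLast
  have hge := height_le_of_adj (v0 := v0) (p.adj_penultimate hnil)
  rw [SimpleGraph.Walk.length_dropLast] at hle
  unfold height at *
  omega

/-- Incidence between the vertices (`Sum.inl`) and the edges (`Sum.inr`) of a hypergraph. -/
def Incident (E : Finset (Finset V)) : V ⊕ Finset V → V ⊕ Finset V → Prop
  | .inl u, .inr e | .inr e, .inl u => e ∈ E ∧ u ∈ e
  | _, _ => False

lemma Incident.symm {x y : V ⊕ Finset V} (h : Incident E x y) : Incident E y x := by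
  cases x <;> cases y <;> exact h

lemma incident_inl_iff {u : V} {y : V ⊕ Finset V} :
    Incident E (.inl u) y ↔ ∃ e, y = .inr e ∧ e ∈ E ∧ u ∈ e := by
  cases y <;> simp [Incident]

lemma incident_inr_iff {e : Finset V} {y : V ⊕ Finset V} :
    Incident E (.inr e) y ↔ ∃ u, y = .inl u ∧ e ∈ E ∧ u ∈ e := by
  cases y <;> simp [Incident]

/-- Height in the incidence graph: a vertex `u` sits at `2 * height u`, an edge one step above
its lowest vertex. -/
noncomputable def nodeHeight (E : Finset (Finset V)) (v0 : V) : V ⊕ Finset V → ℕ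
  | .inl u => 2 * height E v0 u
  | .inr e => 2 * sInf (height E v0 '' e) + 1

lemma nodeHeight_inr {e : Finset V} {x : V} (hx : x ∈ e)
    (hmin : ∀ z ∈ e, height E v0 x ≤ height E v0 z) :
    nodeHeight E v0 (.inr e) = 2 * height E v0 x + 1 := by
  have : IsLeast (height E v0 '' e) (height E v0 x) :=
    ⟨⟨x, hx, rfl⟩, by rintro _ ⟨z, hz, rfl⟩; exact hmin z hz⟩
  simp [nodeHeight, this.csInf_eq]

def IsRootChain (E : Finset (Finset V)) (v0 : V) (c : ℕ → V ⊕ Finset V) (T : ℕ) : Prop :=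
  c 0 = .inl v0 ∧ (∀ j ≤ T, nodeHeight E v0 (c j) = j) ∧ ∀ j < T, Incident E (c j) (c (j + 1))

namespace IsRootChain

variable {c c' : ℕ → V ⊕ Finset V} {T : ℕ}

lemma eq_of_eq (hc : IsRootChain E v0 c T) (hc' : IsRootChain E v0 c' T) {i j : ℕ}
    (hi : i ≤ T) (hj : j ≤ T) (h : c i = c' j) : i = j := by
  rw [← hc.2.1 i hi, ← hc'.2.1 j hj, h]

lemma snoc (hc : IsRootChain E v0 c T) {x : V ⊕ Finset V} (hx : nodeHeight E v0 x = T + 1)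
    (hinc : Incident E (c T) x) :
    IsRootChain E v0 (fun j => if j ≤ T then c j else x) (T + 1) := by
  obtain ⟨h0, hh, hi⟩ := hc
  refine ⟨by simpa using h0, fun j hj => ?_, fun j hj => ?_⟩
  · dsimp only
    split_ifs with h
    · exact hh j h
    · rw [hx]; omega
  · rcases (Nat.lt_succ_iff.1 hj).lt_or_eq with hj | rfl
    · simpa [hj.le, Nat.succ_le_of_lt hj] using hi j hj
    · simpa using hinc

lemma extend {w u : V} (hc : IsRootChain E v0 c (2 * height E v0 w))
    (hcw : c (2 * height E v0 w) = .inl w)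
    {g : Finset V} (hg : g ∈ E) (hw : w ∈ g) (hu : u ∈ g)
    (h : height E v0 u = height E v0 w + 1) :
    ∃ c', IsRootChain E v0 c' (2 * height E v0 u) ∧ c' (2 * height E v0 w + 1) = .inr g ∧
      c' (2 * height E v0 u) = .inl u := by
  have hg' : nodeHeight E v0 (.inr g) = 2 * height E v0 w + 1 :=
    nodeHeight_inr hw fun z hz => by have := height_le_of_mem (v0 := v0) hg hz hu; omega
  have h1 := hc.snoc hg' (by rw [hcw]; exact ⟨hg, hw⟩)
  have h2 := h1.snoc (x := .inl u) (by simp [nodeHeight, h]; ring) (by simpa using ⟨hg, hu⟩)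
  exact ⟨_, by rwa [h, mul_add], by simp, by simp [h]; omega⟩

end IsRootChain

lemma exists_rootChain (hconn : (toGraph E).Connected) (u : V) :
    ∃ c, IsRootChain E v0 c (2 * height E v0 u) ∧ c (2 * height E v0 u) = .inl u := by
  induction hn : height E v0 u generalizing u with
  | zero =>
    have : u = v0 := (hconn.dist_eq_zero_iff.1 hn).symm
    subst this
    exact ⟨fun _ => .inl u, ⟨rfl, fun j hj => by simp [nodeHeight, hn]; omega, by simp⟩, rfl⟩
  | succ n ih =>
    obtain ⟨w, g, hg, hwg, hug, hw⟩ := exists_parent hn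
    obtain ⟨c, hc, hcw⟩ := ih w hw
    rw [← hw] at hc hcw
    obtain ⟨c', hc', -, hc'u⟩ := hc.extend hcw hg hwg hug (by omega)
    exact ⟨c', hn ▸ hc', hn ▸ hc'u⟩

def IsIncidenceCycle (E : Finset (Finset V)) (L : ℕ) (w : ℕ → V ⊕ Finset V) : Prop :=
  w L = w 0 ∧ (∀ j < L, Incident E (w j) (w (j + 1))) ∧ ∀ i j, i < j → j < L → w i ≠ w j

namespace IsIncidenceCycle

variable {L : ℕ} {w : ℕ → V ⊕ Finset V}

lemma rotate (hw : IsIncidenceCycle E L w) (hL : 2 ≤ L) :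
    IsIncidenceCycle E L (fun j => w (if j + 1 < L then j + 1 else j + 1 - L)) := by
  obtain ⟨hclose, hinc, hinj⟩ := hw
  refine ⟨by simp [show 1 < L by omega], fun j hj => ?_, fun i j hij hj => ?_⟩
  · dsimp only
    by_cases h : j + 1 < L
    · by_cases h' : j + 1 + 1 < L
      · simpa [h, h'] using hinc (j + 1) h
      · simpa [h, h', show j + 1 + 1 = L by omega, hclose] using hinc (j + 1) h
    · simpa [h, show j + 1 - L = 0 by omega, show ¬ j + 1 + 1 < L by omega,
        show j + 1 + 1 - L = 1 by omega] using hinc 0 (by omega)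
  · dsimp only
    split_ifs with h1 h2 h2
    · exact hinj _ _ (by omega) h2
    · rw [show j + 1 - L = 0 by omega]
      exact (hinj 0 (i + 1) (by omega) h1).symm
    · omega
    · omega

lemma eq_of_eq (hw : IsIncidenceCycle E L w) {i j : ℕ} (hi : i < L) (hj : j < L)
    (h : w i = w j) : i = j := by
  by_contra hne
  rcases Nat.lt_or_gt_of_ne hne with hlt | hlt
  · exact hw.2.2 i j hlt hj h
  · exact hw.2.2 j i hlt hi h.symm

lemma exists_inl (hw : IsIncidenceCycle E L w) {x0 : V} (h0 : w 0 = .inl x0) {i : ℕ}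
    (hi : 2 * i ≤ L) : ∃ u, w (2 * i) = .inl u := by
  induction i with
  | zero => exact ⟨x0, h0⟩
  | succ i ih =>
    obtain ⟨u, hu⟩ := ih (by omega)
    obtain ⟨e, he, -⟩ := incident_inl_iff.1 (hu ▸ hw.2.1 (2 * i) (by omega))
    obtain ⟨u', hu', -⟩ := incident_inr_iff.1 (he ▸ hw.2.1 (2 * i + 1) (by omega))
    exact ⟨u', hu'⟩

lemma exists_inr (hw : IsIncidenceCycle E L w) {x0 : V} (h0 : w 0 = .inl x0) {i : ℕ}
    (hi : 2 * i + 1 ≤ L) : ∃ e, w (2 * i + 1) = .inr e := by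
  obtain ⟨u, hu⟩ := hw.exists_inl h0 (i := i) (by omega)
  obtain ⟨e, he, -⟩ := incident_inl_iff.1 (hu ▸ hw.2.1 (2 * i) (by omega))
  exact ⟨e, he⟩

lemma even_length (hw : IsIncidenceCycle E L w) {x0 : V} (h0 : w 0 = .inl x0) : L % 2 = 0 := by
  by_contra hodd
  obtain ⟨e, he⟩ := hw.exists_inr h0 (i := L / 2) (by omega)
  rw [show 2 * (L / 2) + 1 = L by omega, hw.1, h0] at he
  cases he

lemma hasCycle_of_inl (hw : IsIncidenceCycle E L w) (hL : 4 ≤ L) {x0 : V}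
    (h0 : w 0 = .inl x0) : HasCycle E := by
  have heven := hw.even_length h0
  set p := L / 2
  set u : ℕ → V := fun i => (w (2 * i)).elim id fun _ => x0
  set e : ℕ → Finset V := fun i => (w (2 * i + 1)).elim (fun _ => ∅) id
  have hu : ∀ i, 2 * i ≤ L → w (2 * i) = .inl (u i) := fun i hi => by
    obtain ⟨x, hx⟩ := hw.exists_inl h0 hi; simp [u, hx]
  have he : ∀ i, 2 * i + 1 ≤ L → w (2 * i + 1) = .inr (e i) := fun i hi => by
    obtain ⟨x, hx⟩ := hw.exists_inr h0 hi; simp [e, hx]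
  have hwrap : ∀ i < p, w (2 * ((i + 1) % p)) = w (2 * i + 1 + 1) := fun i hi => by
    rcases (show i + 1 ≤ p by omega).lt_or_eq with h | h
    · rw [Nat.mod_eq_of_lt h, mul_add]
    · rw [h, Nat.mod_self, mul_zero, ← hw.1]; congr 1; omega
  refine ⟨p, by omega, fun i => u i, fun i => e i, fun i j hij => ?_, fun i j hij => ?_,
    fun i => ?_, fun i => ⟨?_, ?_⟩⟩
  · have := hw.eq_of_eq (i := 2 * i) (j := 2 * j) (by omega) (by omega)
      (by rw [hu _ (by omega), hu _ (by omega)]; exact congrArg _ hij)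
    exact Fin.ext (by omega)
  · have := hw.eq_of_eq (i := 2 * i + 1) (j := 2 * j + 1) (by omega) (by omega)
      (by rw [he _ (by omega), he _ (by omega)]; exact congrArg _ hij)
    exact Fin.ext (by omega)
  · have h := hw.2.1 (2 * i) (by omega)
    rw [hu _ (by omega), he _ (by omega)] at h
    exact h.1
  · have h := hw.2.1 (2 * i) (by omega)
    rw [hu _ (by omega), he _ (by omega)] at h
    exact h.2
  · have h := hw.2.1 (2 * i + 1) (by omega)
    have := Nat.mod_lt (i + 1) (show 0 < p by omega)
    rw [← hwrap i i.isLt, he _ (by omega), hu _ (by omega)] at h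
    simpa [Fin.add_def] using h.2

lemma hasCycle (hw : IsIncidenceCycle E L w) (hL : 4 ≤ L) : HasCycle E := by
  rcases h0 : w 0 with x0 | e
  · exact hw.hasCycle_of_inl hL h0
  · have h1 := hw.2.1 0 (by omega)
    rw [h0, incident_inr_iff] at h1
    obtain ⟨x1, hx1, -⟩ := h1
    exact (hw.rotate (by omega)).hasCycle_of_inl hL (x0 := x1) (by simpa [show 1 < L by omega])

end IsIncidenceCycle

/-- The cycle climbs `c` from the last node the two chains share and comes back down `c'`. -/
theorem hasCycle_of_rootChains {c c' : ℕ → V ⊕ Finset V} {T : ℕ} (hc : IsRootChain E v0 c T)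
    (hc' : IsRootChain E v0 c' T) (htop : c T = c' T) (hne : c (T - 1) ≠ c' (T - 1)) :
    HasCycle E := by
  classical
  set m := Nat.findGreatest (fun i => c i = c' i) (T - 1)
  have hm : c m = c' m := Nat.findGreatest_spec (P := fun i => c i = c' i) (Nat.zero_le _)
    (hc.1.trans hc'.1.symm)
  have hmT : m < T - 1 := (Nat.findGreatest_le _).lt_of_ne fun h => hne (h ▸ hm)
  have hsplit : ∀ i, m < i → i < T → c i ≠ c' i := fun i h1 h2 =>
    Nat.findGreatest_is_greatest h1 (by omega)
  set w : ℕ → V ⊕ Finset V := fun j => if j ≤ T - m then c (m + j) else c' (2 * T - m - j)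
  have hw₁ : ∀ j ≤ T - m, w j = c (m + j) := fun j hj => if_pos hj
  have hw₂ : ∀ j, T - m ≤ j → w j = c' (2 * T - m - j) := fun j hj => by
    rcases hj.lt_or_eq with hj | rfl
    · exact if_neg (by omega)
    · rw [hw₁ _ le_rfl, show m + (T - m) = T by omega, htop]; congr 1; omega
  refine IsIncidenceCycle.hasCycle (L := 2 * (T - m)) (w := w)
    ⟨?_, fun j hj => ?_, ?_⟩ (by omega)
  · rw [hw₂ _ (by omega), hw₁ _ (by omega), show 2 * T - m - 2 * (T - m) = m by omega,
      add_zero, hm]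
  · by_cases h : j < T - m
    · rw [hw₁ _ h.le, hw₁ _ h]
      exact hc.2.2 _ (by omega)
    · rw [hw₂ _ (by omega), hw₂ _ (by omega),
        show 2 * T - m - j = 2 * T - m - (j + 1) + 1 by omega]
      exact (hc'.2.2 _ (by omega)).symm
  · intro i j hij hj heq
    by_cases hi : i ≤ T - m
    · rw [hw₁ _ hi] at heq
      by_cases hj' : j ≤ T - m
      · rw [hw₁ _ hj'] at heq
        have := hc.eq_of_eq hc (by omega) (by omega) heq
        omega
      · rw [hw₂ _ (by omega)] at heq
        have := hc.eq_of_eq hc' (by omega) (by omega) heq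
        exact hsplit (m + i) (by omega) (by omega) (by rwa [← this] at heq)
    · rw [hw₂ _ (by omega), hw₂ _ (by omega)] at heq
      have := hc'.eq_of_eq hc' (by omega) (by omega) heq
      omega

theorem eq_of_lowest_in_edge (hconn : (toGraph E).Connected) (hNC : ¬ HasCycle E)
    {e : Finset V} (he : e ∈ E) {x y : V} (hx : x ∈ e) (hy : y ∈ e)
    (hxy : height E v0 x = height E v0 y) (hmin : ∀ z ∈ e, height E v0 x ≤ height E v0 z) :
    x = y := by
  by_contra hne
  have he' : nodeHeight E v0 (.inr e) = 2 * height E v0 x + 1 := nodeHeight_inr hx hmin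
  obtain ⟨c, hc, hcx⟩ := exists_rootChain (v0 := v0) hconn x
  obtain ⟨c', hc', hcy⟩ := exists_rootChain (v0 := v0) hconn y
  rw [← hxy] at hc' hcy
  apply hNC
  refine hasCycle_of_rootChains (hc.snoc he' (by rw [hcx]; exact ⟨he, hx⟩))
    (hc'.snoc he' (by rw [hcy]; exact ⟨he, hy⟩)) (by simp) ?_
  simpa [hcx, hcy] using hne

theorem edge_eq_of_mem_of_height_succ (hconn : (toGraph E).Connected) (hNC : ¬ HasCycle E)
    {e₁ e₂ : Finset V} (he₁ : e₁ ∈ E) (he₂ : e₂ ∈ E)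
    {v u₁ u₂ : V} (hv₁ : v ∈ e₁) (hv₂ : v ∈ e₂) (hu₁ : u₁ ∈ e₁) (hu₂ : u₂ ∈ e₂)
    (h₁ : height E v0 v = height E v0 u₁ + 1) (h₂ : height E v0 v = height E v0 u₂ + 1) :
    e₁ = e₂ := by
  by_contra hne
  obtain ⟨c, hc, hcu⟩ := exists_rootChain (v0 := v0) hconn u₁
  obtain ⟨c', hc', hcu'⟩ := exists_rootChain (v0 := v0) hconn u₂
  obtain ⟨d, hd, hde, hdv⟩ := hc.extend hcu he₁ hu₁ hv₁ h₁
  obtain ⟨d', hd', hde', hdv'⟩ := hc'.extend hcu' he₂ hu₂ hv₂ h₂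
  refine hNC (hasCycle_of_rootChains hd hd' (by rw [hdv, hdv']) ?_)
  rw [show 2 * height E v0 v - 1 = 2 * height E v0 u₁ + 1 by omega, hde,
    show 2 * height E v0 u₁ + 1 = 2 * height E v0 u₂ + 1 by omega, hde']
  simpa using hne

theorem exists_adj_height_succ [DecidableEq V] (hconn : (toGraph E).Connected)
    (hNC : ¬ HasCycle E) (hE : ∀ e ∈ E, 2 ≤ e.card) {v : V}
    (hv : 1 < deg E v) : ∃ w, (toGraph E).Adj v w ∧ height E v0 w = height E v0 v + 1 := by
  obtain ⟨e, he, hve, hlow⟩ : ∃ e ∈ E, v ∈ e ∧ ∀ z ∈ e, height E v0 v ≤ height E v0 z := by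
    obtain ⟨e₁, he₁, e₂, he₂, hne⟩ := Finset.one_lt_card.1 hv
    rw [Finset.mem_filter] at he₁ he₂
    by_contra! H
    obtain ⟨u₁, hu₁, h₁⟩ := H e₁ he₁.1 he₁.2
    obtain ⟨u₂, hu₂, h₂⟩ := H e₂ he₂.1 he₂.2
    have := height_le_of_mem (v0 := v0) he₁.1 hu₁ he₁.2
    have := height_le_of_mem (v0 := v0) he₂.1 hu₂ he₂.2
    exact hne (edge_eq_of_mem_of_height_succ (v0 := v0) hconn hNC he₁.1 he₂.1 he₁.2 he₂.2 hu₁ hu₂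
      (by omega) (by omega))
  obtain ⟨x, hx, hxv⟩ := Finset.exists_mem_ne (hE e he) v
  refine ⟨x, toGraph_adj_of_mem hxv.symm he hve hx, ?_⟩
  have hxv' : height E v0 x ≠ height E v0 v := fun h =>
    hxv (eq_of_lowest_in_edge hconn hNC he hx hve h (fun z hz => h ▸ hlow z hz))
  have := hlow x hx
  have := height_le_of_mem (v0 := v0) he hve hx
  omega

end Incidence

section AdjacencyMatrix

variable {V : Type*} [DecidableEq V] {E : Finset (Finset V)}

lemma adjMat_nonneg (i j : V) : 0 ≤ adjMat E i j := by
  unfold adjMat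
  split_ifs
  · refine Finset.sum_nonneg fun e he => one_div_nonneg.2 (sub_nonneg.2 ?_)
    exact_mod_cast Finset.card_pos.2 ⟨i, (Finset.mem_filter.1 he).2.1⟩
  · exact le_rfl

lemma adjMat_pos_of_adj {i j : V} (h : (toGraph E).Adj i j) : 0 < adjMat E i j := by
  obtain ⟨hij, e, he, hi, hj⟩ := h
  unfold adjMat
  rw [if_pos hij]
  refine Finset.sum_pos' (fun e he => ?_) ⟨e, Finset.mem_filter.2 ⟨he, hi, hj⟩, ?_⟩
  · refine one_div_nonneg.2 (sub_nonneg.2 ?_)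
    exact_mod_cast Finset.card_pos.2 ⟨i, (Finset.mem_filter.1 he).2.1⟩
  · have : 1 < e.card := Finset.one_lt_card.2 ⟨i, hi, j, hj, hij⟩
    exact one_div_pos.2 (sub_pos.2 (by exact_mod_cast this))

lemma adj_of_adjMat_pos {i j : V} (h : 0 < adjMat E i j) : (toGraph E).Adj i j := by
  by_contra hadj
  refine h.ne' ?_
  unfold adjMat
  split_ifs with hij
  · exact Finset.sum_eq_zero fun e he =>
      absurd ⟨hij, e, (Finset.mem_filter.1 he).1, (Finset.mem_filter.1 he).2⟩ hadj
  · rfl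

end AdjacencyMatrix

section Laplacian

variable {E : Finset (Finset V)}

lemma sum_adjMat (hE : ∀ e ∈ E, 2 ≤ e.card) (i : V) : ∑ j, adjMat E i j = deg E i := by
  have row : ∀ j, adjMat E i j =
      ∑ e ∈ E with i ∈ e, if j ∈ e.erase i then 1 / ((e.card : ℝ) - 1) else 0 := by
    intro j
    rw [adjMat, Finset.sum_filter, Finset.sum_filter]
    split_ifs with hij
    · refine Finset.sum_congr rfl fun e _ => ?_
      by_cases hi : i ∈ e <;> simp [hi, Ne.symm hij]
    · rw [not_not] at hij
      subst hij
      simp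
  have col : ∀ e ∈ {e ∈ E | i ∈ e},
      ∑ j, (if j ∈ e.erase i then 1 / ((e.card : ℝ) - 1) else 0) = 1 := by
    intro e he
    obtain ⟨he, hi⟩ := Finset.mem_filter.1 he
    have h2 := hE e he
    rw [Finset.sum_ite_mem, Finset.univ_inter, Finset.sum_const, Finset.card_erase_of_mem hi,
      nsmul_eq_mul, Nat.cast_sub (by omega), Nat.cast_one, mul_one_div,
      div_self (sub_ne_zero.2 (by exact_mod_cast (by omega : e.card ≠ 1)))]
  rw [Finset.sum_congr rfl fun j _ => row j, Finset.sum_comm, Finset.sum_congr rfl col]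
  simp [deg]

lemma lap_eq_sum (hE : ∀ e ∈ E, 2 ≤ e.card) (f : V → ℝ) (i : V) :
    lap E f i = ∑ j, adjMat E i j * (f i - f j) := by
  rw [lap, ← sum_adjMat hE i, Finset.sum_mul, ← Finset.sum_sub_distrib]
  simp only [mul_sub, mul_comm]

lemma exists_adj_lt_of_lap_pos (hE : ∀ e ∈ E, 2 ≤ e.card) {f : V → ℝ} {v : V}
    (h : 0 < lap E f v) : ∃ j, (toGraph E).Adj v j ∧ f j < f v := by
  rw [lap_eq_sum hE] at h
  obtain ⟨j, -, hj⟩ := Finset.exists_lt_of_sum_lt (s := Finset.univ) (f := 0)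
    (g := fun j => adjMat E v j * (f v - f j)) (by simpa using h)
  obtain ⟨hA, hf⟩ := pos_and_pos_or_neg_and_neg_of_mul_pos hj |>.resolve_right
    fun h => (adjMat_nonneg v j).not_gt h.1
  exact ⟨j, adj_of_adjMat_pos hA, sub_pos.1 hf⟩

/-- Maximum principle: if `μ ≤ 0`, the maximum of `f` spreads along edges to the boundary,
where `f = 0`. -/
theorem eigenvalue_pos (hE : ∀ e ∈ E, 2 ≤ e.card) (hconn : HyperConnected E)
    (hb : ∃ b, deg E b = 1) {f : V → ℝ} {μ : ℝ} (hvan : Vanishes E f)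
    (heig : ∀ v, deg E v ≠ 1 → lap E f v = μ * f v) {v0 : V} (hmax : ∀ v, f v ≤ f v0)
    (hpos : 0 < f v0) : 0 < μ := by
  by_contra! hμ
  have hspread : ∀ x, Relation.ReflTransGen (HAdj E) v0 x → f x = f v0 := by
    intro x hx
    induction hx with
    | refl => rfl
    | @tail x y _ hxy ih =>
      have hx : deg E x ≠ 1 := fun h => by have := hvan x h; linarith
      have hnonneg : ∀ j ∈ Finset.univ, 0 ≤ adjMat E x j * (f x - f j) := fun j _ =>
        mul_nonneg (adjMat_nonneg x j) (by rw [ih]; linarith [hmax j])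
      have hsum : ∑ j, adjMat E x j * (f x - f j) = 0 := by
        refine le_antisymm ?_ (Finset.sum_nonneg hnonneg)
        rw [← lap_eq_sum hE, heig x hx, ih]
        exact mul_nonpos_of_nonpos_of_nonneg hμ hpos.le
      have hy := (Finset.sum_eq_zero_iff_of_nonneg hnonneg).1 hsum y (Finset.mem_univ _)
      rcases mul_eq_zero.1 hy with h | h
      · exact absurd h (adjMat_pos_of_adj hxy).ne'
      · linarith
  obtain ⟨b, hb⟩ := hb
  have := hspread b (hconn v0 b)
  rw [hvan b hb] at this
  linarith

end Laplacian

/-- if f is the first Dirichlet eigenfunction of a k-uniform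
supertree with boundary, rooted at a vertex v0 maximizing f, and f is
non-increasing with height, then every interior vertex v has a child w (a
neighbor at height h(v)+1) with f(w) < f(v). -/
theorem interior_vertex_has_smaller_child (k : ℕ) (hk : 2 ≤ k)
    (E : Finset (Finset V)) (hG : IsSupertree k E) (hb : ∃ v, deg E v = 1)
    (f : V → ℝ) (hf : IsFirstEigfun E f)
    (v0 : V) (hmax : ∀ v, f v ≤ f v0)
    (hmono : ∀ u v : V, height E v0 u < height E v0 v → f v ≤ f u) :
    ∀ v, deg E v ≠ 1 → ∃ w, (toGraph E).Adj v w ∧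
      height E v0 w = height E v0 v + 1 ∧ f w < f v := by
  intro v hv
  obtain ⟨hcard, hconn, hNC⟩ := hG
  have hE : ∀ e ∈ E, 2 ≤ e.card := fun e he => hcard e he ▸ hk
  obtain ⟨-, hvan, hpos, heig⟩ := hf
  have hμ : 0 < firstEig E :=
    eigenvalue_pos hE hconn hb hvan heig hmax ((hpos v hv).trans_le (hmax v))
  obtain ⟨j, hvj, hfj⟩ := exists_adj_lt_of_lap_pos hE
    (by rw [heig v hv]; exact mul_pos hμ (hpos v hv))
  have hj : height E v0 v ≤ height E v0 j := not_lt.1 fun h => (hmono j v h).not_gt hfj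
  rcases (height_le_of_adj (v0 := v0) hvj).eq_or_lt with hj' | hj'
  · exact ⟨j, hvj, hj', hfj⟩
  have hdeg : 1 < deg E v := by
    obtain ⟨-, e, he, hve, -⟩ := hvj
    have : 0 < deg E v := Finset.card_pos.2 ⟨e, Finset.mem_filter.2 ⟨he, hve⟩⟩
    omega
  obtain ⟨w, hvw, hw⟩ := exists_adj_height_succ (connected_toGraph hconn v0) hNC hE hdeg
  exact ⟨w, hvw, hw, (hmono j w (by omega)).trans_lt hfj⟩
end
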